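/- arXiv:1410.6692 — 8 statements merged into one kernel-verified Lean document; each statement's English description precedes it below -/
import Mathlib

section
/- Let S be a commutative ring, let a, b ∈ S, and let x : Fin d₁ → S and y : Fin d₂ → S be finite families of elements of S. Then the product ∏_{i : Fin d₁} ∏_{j : Fin d₂} (a·b − x i · y j) lies in the ideal of S generated by the two elements ∏_{i : Fin d₁} (a − x i) and ∏_{j : Fin d₂} (b − y j). -/
open Polynomial in
/-- Lemma 5.1 (commutative-ring form): the "tensor product polynomial" evaluated at `a * b`
lies in the ideal generated by `∏ (a - x i)` and `∏ (b - y j)`. -/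
theorem prod_sub_mul_mem_span {S : Type*} [CommRing S] {d₁ d₂ : ℕ}
    (a b : S) (x : Fin d₁ → S) (y : Fin d₂ → S) :
    (∏ i : Fin d₁, ∏ j : Fin d₂, (a * b - x i * y j)) ∈
      Ideal.span {∏ i : Fin d₁, (a - x i), ∏ j : Fin d₂, (b - y j)} := by
  set I := Ideal.span {∏ i : Fin d₁, (a - x i), ∏ j : Fin d₂, (b - y j)} with hI
  have hH1 : (∏ i : Fin d₁, (a - x i)) ∈ I := Ideal.subset_span (by simp)
  have hH2 : (∏ j : Fin d₂, (b - y j)) ∈ I := Ideal.subset_span (by simp)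
  have key : ∀ i : Fin d₁, ∃ g : S,
      (∏ j : Fin d₂, (a * b - x i * y j))
        = x i ^ d₂ * (∏ j : Fin d₂, (b - y j)) + (a - x i) * g := by
    intro i
    obtain ⟨g, hg⟩ := sub_dvd_eval_sub a (x i) (∏ j : Fin d₂, (C b * X - C (x i * y j)))
    refine ⟨g, ?_⟩
    have e1 : Polynomial.eval a (∏ j : Fin d₂, (C b * X - C (x i * y j)))
        = ∏ j : Fin d₂, (a * b - x i * y j) := by
      simp only [eval_prod, eval_sub, eval_mul, eval_C, eval_X, mul_comm b a]
    have e2 : Polynomial.eval (x i) (∏ j : Fin d₂, (C b * X - C (x i * y j)))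
        = x i ^ d₂ * (∏ j : Fin d₂, (b - y j)) := by
      simp only [eval_prod, eval_sub, eval_mul, eval_C, eval_X]
      have h : ∀ j : Fin d₂, b * x i - x i * y j = x i * (b - y j) := fun j => by ring
      simp_rw [h, Finset.prod_mul_distrib, Finset.prod_const, Finset.card_univ,
        Fintype.card_fin]
    rw [e1, e2] at hg
    linear_combination hg
  choose g hg using key
  rw [← Ideal.Quotient.eq_zero_iff_mem]
  have : (Ideal.Quotient.mk I) (∏ i : Fin d₁, ∏ j : Fin d₂, (a * b - x i * y j))
      = (Ideal.Quotient.mk I) ((∏ i : Fin d₁, (a - x i)) * ∏ i : Fin d₁, g i) := by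
    rw [map_prod, map_mul, map_prod, map_prod, ← Finset.prod_mul_distrib]
    refine Finset.prod_congr rfl fun i _ => ?_
    rw [hg i, map_add, map_mul, map_mul, Ideal.Quotient.eq_zero_iff_mem.2 hH2]
    ring
  rw [this, map_mul, Ideal.Quotient.eq_zero_iff_mem.2 hH1, zero_mul]
end

section
/- Let R be a commutative ring, let M₁ and M₂ be R-modules, let f₁ be an R-linear endomorphism of M₁ and f₂ an R-linear endomorphism of M₂, and let x : Fin d₁ → R and y : Fin d₂ → R. Suppose ∏_{i : Fin d₁} (f₁ − (x i) • id) = 0 in End_R(M₁) and ∏_{j : Fin d₂} (f₂ − (y j) • id) = 0 in End_R(M₂). Then ∏_{i : Fin d₁} ∏_{j : Fin d₂} (TensorProduct.map f₁ f₂ − (x i · y j) • id) = 0 in End_R(M₁ ⊗[R] M₂). -/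
open scoped TensorProduct

private lemma aux_span {T : Type*} [CommRing T] (A B a : T) (bs : List T) :
    (bs.map fun b => A * B - a * b).prod
      - a ^ bs.length * (bs.map fun b => B - b).prod ∈ Ideal.span {A - a} := by
  induction bs with
  | nil => simp
  | cons b bs ih =>
    have h : (((b :: bs).map fun c => A * B - a * c).prod
        - a ^ (b :: bs).length * ((b :: bs).map fun c => B - c).prod)
        = (A - a) * (B * ((bs.map fun c => A * B - a * c).prod))
          + (a * (B - b)) * ((bs.map fun c => A * B - a * c).prod
              - a ^ bs.length * (bs.map fun c => B - c).prod) := by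
      simp only [List.map_cons, List.prod_cons, List.length_cons, pow_succ]
      ring
    rw [h]
    exact add_mem (Ideal.mul_mem_right _ _ (Ideal.subset_span (Set.mem_singleton _)))
      (Ideal.mul_mem_left _ _ ih)

private lemma comm_key {T : Type*} [CommRing T] (A B : T) (as bs : List T)
    (hA : (as.map fun a => A - a).prod = 0)
    (hB : (bs.map fun b => B - b).prod = 0) :
    (as.map fun a => (bs.map fun b => A * B - a * b).prod).prod = 0 := by
  have hin : ∀ a : T, ∃ E, (bs.map fun b => A * B - a * b).prod = (A - a) * E := by
    intro a
    have h := aux_span A B a bs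
    rw [hB, mul_zero, sub_zero] at h
    obtain ⟨E, hE⟩ := Ideal.mem_span_singleton'.mp h
    exact ⟨E, by rw [← hE]; ring⟩
  choose E hE using hin
  calc (as.map fun a => (bs.map fun b => A * B - a * b).prod).prod
      = (as.map fun a => (A - a) * E a).prod := by simp only [hE]
    _ = (as.map fun a => A - a).prod * (as.map E).prod := List.prod_map_mul
    _ = 0 := by rw [hA, zero_mul]

/-- Module-theoretic core of Theorem 1.3: if `f₁` is annihilated by `∏ (z - x i)` and `f₂` is
annihilated by `∏ (z - y j)`, then `f₁ ⊗ f₂` is annihilated by `∏_{i,j} (z - x i * y j)`.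
All the factors commute, so we may take the products in any fixed order; we use ordered
list products over `Fin d₁` and `Fin d₂`. -/
theorem tensorProduct_map_annihilated
    {R : Type*} [CommRing R] {M₁ M₂ : Type*}
    [AddCommGroup M₁] [Module R M₁] [AddCommGroup M₂] [Module R M₂]
    {d₁ d₂ : ℕ} (f₁ : Module.End R M₁) (f₂ : Module.End R M₂)
    (x : Fin d₁ → R) (y : Fin d₂ → R)
    (h₁ : (List.ofFn fun i : Fin d₁ => f₁ - x i • (1 : Module.End R M₁)).prod = 0)
    (h₂ : (List.ofFn fun j : Fin d₂ => f₂ - y j • (1 : Module.End R M₂)).prod = 0) :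
    (List.ofFn fun i : Fin d₁ =>
      (List.ofFn fun j : Fin d₂ =>
        (TensorProduct.map (f₁ : M₁ →ₗ[R] M₁) (f₂ : M₂ →ₗ[R] M₂) :
            Module.End R (M₁ ⊗[R] M₂))
          - (x i * y j) • (1 : Module.End R (M₁ ⊗[R] M₂))).prod).prod = 0 := by
  set S := Module.End R (M₁ ⊗[R] M₂) with hS
  set A : S := f₁.rTensor M₂ with hA
  set B : S := f₂.lTensor M₁ with hB
  have hABmul : A * B = TensorProduct.map f₁ f₂ := LinearMap.rTensor_comp_lTensor (f := f₁) (g := f₂)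
  have hBAmul : B * A = TensorProduct.map f₁ f₂ := LinearMap.lTensor_comp_rTensor (f := f₁) (g := f₂)
  have hcomm : ∀ a ∈ ({A, B} : Set S), ∀ b ∈ ({A, B} : Set S), a * b = b * a := by
    rintro a (rfl | rfl) b (rfl | rfl) <;> simp only [hABmul, hBAmul]
  set T := Algebra.adjoin R ({A, B} : Set S) with hT
  set A' : T := ⟨A, Algebra.subset_adjoin (by simp)⟩ with hA'
  set B' : T := ⟨B, Algebra.subset_adjoin (by simp)⟩ with hB'
  have hval : ∀ z : T, (z : S) = 0 → z = 0 := fun z h => Subtype.ext h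
  -- transfer h₁ to `A`
  let φ : Module.End R M₁ →* S :=
    { toFun := fun g => g.rTensor M₂
      map_one' := LinearMap.rTensor_id M₂ M₁
      map_mul' := fun g h => LinearMap.rTensor_mul M₂ g h }
  have key1 : (List.ofFn fun i : Fin d₁ => A - x i • (1 : S)).prod = 0 := by
    have : (List.ofFn fun i : Fin d₁ => A - x i • (1 : S)).prod
        = φ ((List.ofFn fun i : Fin d₁ => f₁ - x i • (1 : Module.End R M₁)).prod) := by
      rw [map_list_prod, List.map_ofFn]
      refine congrArg List.prod (congrArg List.ofFn (funext fun i => ?_))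
      show A - x i • (1 : S) = (f₁ - x i • (1 : Module.End R M₁)).rTensor M₂
      rw [LinearMap.rTensor_sub, LinearMap.rTensor_smul, hA]
      simp only [Module.End.one_eq_id, LinearMap.rTensor_id]
      rfl
    rw [this, h₁]
    exact LinearMap.rTensor_zero M₂
  let ψ : Module.End R M₂ →* S :=
    { toFun := fun g => g.lTensor M₁
      map_one' := LinearMap.lTensor_id M₁ M₂
      map_mul' := fun g h => LinearMap.lTensor_mul M₁ g h }
  have key2 : (List.ofFn fun j : Fin d₂ => B - y j • (1 : S)).prod = 0 := by
    have : (List.ofFn fun j : Fin d₂ => B - y j • (1 : S)).prod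
        = ψ ((List.ofFn fun j : Fin d₂ => f₂ - y j • (1 : Module.End R M₂)).prod) := by
      rw [map_list_prod, List.map_ofFn]
      refine congrArg List.prod (congrArg List.ofFn (funext fun j => ?_))
      show B - y j • (1 : S) = (f₂ - y j • (1 : Module.End R M₂)).lTensor M₁
      rw [LinearMap.lTensor_sub, LinearMap.lTensor_smul, hB]
      simp only [Module.End.one_eq_id, LinearMap.lTensor_id]
      rfl
    rw [this, h₂]
    exact LinearMap.lTensor_zero M₁
  -- hypotheses inside `T`
  set as : List T := List.ofFn fun i : Fin d₁ => algebraMap R T (x i) with has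
  set bs : List T := List.ofFn fun j : Fin d₂ => algebraMap R T (y j) with hbs
  have hptA : ∀ i : Fin d₁, ((A' - algebraMap R T (x i) : T) : S) = A - x i • (1 : S) := by
    intro i
    push_cast
    rw [Algebra.algebraMap_eq_smul_one]
  have hptB : ∀ j : Fin d₂, ((B' - algebraMap R T (y j) : T) : S) = B - y j • (1 : S) := by
    intro j
    push_cast
    rw [Algebra.algebraMap_eq_smul_one]
  have hA'0 : (as.map fun a => A' - a).prod = 0 := by
    apply hval
    show T.val ((as.map fun a => A' - a).prod) = 0
    rw [map_list_prod (Subalgebra.val T), has, List.map_ofFn, List.map_ofFn]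
    calc (List.ofFn ((Subalgebra.val T) ∘ (fun a => A' - a) ∘ fun i => algebraMap R T (x i))).prod
        = (List.ofFn fun i : Fin d₁ => A - x i • (1 : S)).prod := by
          exact congrArg List.prod (congrArg List.ofFn (funext fun i => hptA i))
      _ = 0 := key1
  have hB'0 : (bs.map fun b => B' - b).prod = 0 := by
    apply hval
    show T.val ((bs.map fun b => B' - b).prod) = 0
    rw [map_list_prod (Subalgebra.val T), hbs, List.map_ofFn, List.map_ofFn]
    calc (List.ofFn ((Subalgebra.val T) ∘ (fun b => B' - b) ∘ fun j => algebraMap R T (y j))).prod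
        = (List.ofFn fun j : Fin d₂ => B - y j • (1 : S)).prod := by
          exact congrArg List.prod (congrArg List.ofFn (funext fun j => hptB j))
      _ = 0 := key2
  have main := @comm_key ↥T (Algebra.adjoinCommRingOfComm R hcomm) A' B' as bs hA'0 hB'0
  -- transfer the conclusion back
  have hpt : ∀ (i : Fin d₁) (j : Fin d₂),
      ((A' * B' - algebraMap R T (x i) * algebraMap R T (y j) : T) : S)
        = (TensorProduct.map (f₁ : M₁ →ₗ[R] M₁) (f₂ : M₂ →ₗ[R] M₂) : S)
            - (x i * y j) • (1 : S) := by
    intro i j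
    push_cast
    rw [hABmul, ← Algebra.algebraMap_eq_smul_one, map_mul]
  have := congrArg (Subalgebra.val T) main
  rw [map_list_prod (Subalgebra.val T), map_zero] at this
  rw [has, List.map_ofFn, List.map_ofFn] at this
  calc (List.ofFn fun i : Fin d₁ =>
      (List.ofFn fun j : Fin d₂ =>
        (TensorProduct.map (f₁ : M₁ →ₗ[R] M₁) (f₂ : M₂ →ₗ[R] M₂) : S)
          - (x i * y j) • (1 : S)).prod).prod
      = (List.ofFn ((Subalgebra.val T) ∘
          (fun a => (bs.map fun b => A' * B' - a * b).prod) ∘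
          fun i => algebraMap R T (x i))).prod := by
        refine congrArg List.prod (congrArg List.ofFn (funext fun i => ?_))
        show (List.ofFn fun j : Fin d₂ =>
            (TensorProduct.map (f₁ : M₁ →ₗ[R] M₁) (f₂ : M₂ →ₗ[R] M₂) : S)
              - (x i * y j) • (1 : S)).prod
          = (Subalgebra.val T) ((bs.map fun b => A' * B' - algebraMap R T (x i) * b).prod)
        rw [map_list_prod (Subalgebra.val T), hbs, List.map_ofFn, List.map_ofFn]
        exact congrArg List.prod (congrArg List.ofFn (funext fun j => (hpt i j).symm))
    _ = 0 := this
end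

section
/- Fix q ∈ ℤ and let M := (ℕ × ℕ) →₀ ℤ be the free ℤ-module on pairs (a,b) of natural numbers, with basis vectors e(a,b). Define ℤ-linear endomorphisms T₁₀ and T₀₁ of M on basis vectors by: T₁₀ e(a,b) = e(a−1,b) + (q−1)·e(a,b) + q⁴·e(a+1,b) for a ≥ 1; T₁₀ e(0,b) = (q⁴ − q²)·e(1,b) + q²·e(0,b+1) + (q−1)·e(0,b) + e(0,b−1) for b ≥ 1; T₁₀ e(0,0) = (q⁴ − q²)·e(1,0) + (q² + q)·e(0,1); T₀₁ e(a,0) = (q² + q)·e(a,1); T₀₁ e(a,b) = e(a,b−1) + (q−1)·e(a,b) + q²·e(a,b+1) for b ≥ 1. Define P₂ := (1 + q⁶)·id − q²·(T₀₁ − (q−1)·id) and P₄ := (1 + q¹²)·id + (−T₁₀∘T₀₁ + (q−1)·(T₁₀ + T₀₁) − (q−1)²·id) + q²·(T₁₀∘T₁₀ + q²·T₀₁∘T₀₁ − 2(q−1)·T₁₀ − 2q²(q−1)·T₀₁ − (q⁴ + 2q³ − 2q² + 2q − 1)·id) + q⁶·(−T₁₀∘T₀₁ + (q−1)·(T₁₀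 + T₀₁) − (q−1)²·id). Then every coefficient of the element (P₂ ∘ P₄)(e(0,0)) of M is divisible by q·(q + 1). -/
noncomputable section DistributionRelations

/-- The basis vector `e(a,b)` of `ℤ[Inv_τ] = (ℕ × ℕ) →₀ ℤ`. -/
def e (p : ℕ × ℕ) : (ℕ × ℕ) →₀ ℤ := Finsupp.single p 1

/-- The action of the Hecke operator `1_{K(δ_V,1)K}` on basis vectors (Lemma 6.1). -/
def T10fun (q : ℤ) : ℕ × ℕ → ((ℕ × ℕ) →₀ ℤ)
  | (a + 1, b) => e (a, b) + (q - 1) • e (a + 1, b) + q ^ 4 • e (a + 2, b)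
  | (0, b + 1) => (q ^ 4 - q ^ 2) • e (1, b + 1) + q ^ 2 • e (0, b + 2)
      + (q - 1) • e (0, b + 1) + e (0, b)
  | (0, 0) => (q ^ 4 - q ^ 2) • e (1, 0) + (q ^ 2 + q) • e (0, 1)

/-- The action of the Hecke operator `1_{K(1,δ_W)K}` on basis vectors (Lemma 6.1). -/
def T01fun (q : ℤ) : ℕ × ℕ → ((ℕ × ℕ) →₀ ℤ)
  | (a, 0) => (q ^ 2 + q) • e (a, 1)
  | (a, b + 1) => e (a, b) + (q - 1) • e (a, b + 1) + q ^ 2 • e (a, b + 2)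

/-- The Hecke operator `T₁₀` as a `ℤ`-linear endomorphism of `ℤ[Inv_τ]`. -/
def T10 (q : ℤ) : Module.End ℤ ((ℕ × ℕ) →₀ ℤ) := Finsupp.lift _ ℤ _ (T10fun q)

/-- The Hecke operator `T₀₁` as a `ℤ`-linear endomorphism of `ℤ[Inv_τ]`. -/
def T01 (q : ℤ) : Module.End ℤ ((ℕ × ℕ) →₀ ℤ) := Finsupp.lift _ ℤ _ (T01fun q)

/-- The quadratic factor `H⁽²⁾` of the Hecke polynomial evaluated at `z = 1`. -/
def P2 (q : ℤ) : Module.End ℤ ((ℕ × ℕ) →₀ ℤ) :=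
  (1 + q ^ 6) • (1 : Module.End ℤ ((ℕ × ℕ) →₀ ℤ))
    - q ^ 2 • (T01 q - (q - 1) • (1 : Module.End ℤ ((ℕ × ℕ) →₀ ℤ)))

/-- The quartic factor `H⁽⁴⁾` of the Hecke polynomial evaluated at `z = 1`. -/
def P4 (q : ℤ) : Module.End ℤ ((ℕ × ℕ) →₀ ℤ) :=
  (1 + q ^ 12) • (1 : Module.End ℤ ((ℕ × ℕ) →₀ ℤ))
    + (-(T10 q * T01 q) + (q - 1) • (T10 q + T01 q)
        - (q - 1) ^ 2 • (1 : Module.End ℤ ((ℕ × ℕ) →₀ ℤ)))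
    + q ^ 2 • (T10 q * T10 q + q ^ 2 • (T01 q * T01 q)
        - (2 * (q - 1)) • T10 q - (2 * q ^ 2 * (q - 1)) • T01 q
        - (q ^ 4 + 2 * q ^ 3 - 2 * q ^ 2 + 2 * q - 1) • (1 : Module.End ℤ ((ℕ × ℕ) →₀ ℤ)))
    + q ^ 6 • (-(T10 q * T01 q) + (q - 1) • (T10 q + T01 q)
        - (q - 1) ^ 2 • (1 : Module.End ℤ ((ℕ × ℕ) →₀ ℤ)))

lemma T10_app (q : ℤ) (p : ℕ × ℕ) : T10 q (e p) = T10fun q p := by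
  simp [T10, e, Finsupp.lift_apply, Finsupp.sum_single_index]

lemma T01_app (q : ℤ) (p : ℕ × ℕ) : T01 q (e p) = T01fun q p := by
  simp [T01, e, Finsupp.lift_apply, Finsupp.sum_single_index]

lemma T10fun00 (q : ℤ) :
    T10fun q (0, 0) = (q ^ 4 - q ^ 2) • e (1, 0) + (q ^ 2 + q) • e (0, 1) := rfl

lemma T10fun10 (q : ℤ) :
    T10fun q (1, 0) = e (0, 0) + (q - 1) • e (1, 0) + q ^ 4 • e (2, 0) := rfl

lemma T10fun01 (q : ℤ) :
    T10fun q (0, 1) = (q ^ 4 - q ^ 2) • e (1, 1) + q ^ 2 • e (0, 2)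
      + (q - 1) • e (0, 1) + e (0, 0) := rfl

lemma T01fun_a0 (q : ℤ) (a : ℕ) : T01fun q (a, 0) = (q ^ 2 + q) • e (a, 1) := rfl

lemma T01fun_a1 (q : ℤ) (a : ℕ) :
    T01fun q (a, 1) = e (a, 0) + (q - 1) • e (a, 1) + q ^ 2 • e (a, 2) := rfl

lemma T01fun_a2 (q : ℤ) (a : ℕ) :
    T01fun q (a, 2) = e (a, 1) + (q - 1) • e (a, 2) + q ^ 2 • e (a, 3) := rfl

set_option maxHeartbeats 1000000 in
/-- Proposition 6.2: `H_τ(1)·(0,0) ∈ q(q+1)·ℤ[Inv_τ]`. -/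
theorem hecke_value_at_one_divisible (q : ℤ) (v : ℕ × ℕ) :
    q * (q + 1) ∣ ((P2 q * P4 q) (e (0, 0))) v := by
  refine ⟨(q^16 - q^15 + q^14 - 3*q^12 + 4*q^11 - 3*q^10 - q^9 + 6*q^8 - 6*q^7 + 2*q^6
        + 3*q^5 - 6*q^4 + 3*q^3 + q^2 - 2*q + 1) * (if ((0, 0) : ℕ × ℕ) = v then (1:ℤ) else 0)
      + (-q^14 + q^13 - q^12 - q^11 + 4*q^10 - 2*q^9 + 3*q^7 - 5*q^6 + 3*q^4 - 2*q^3 + q^2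
        + q - 1) * (if ((0, 1) : ℕ × ℕ) = v then (1:ℤ) else 0)
      + (-q^14 + q^12 - q^11 + 2*q^10 + q^9 - 3*q^8 + q^7 - q^5 + 2*q^4 - q^2)
          * (if ((0, 2) : ℕ × ℕ) = v then (1:ℤ) else 0)
      + (q^12 - q^10 - q^8 + q^6) * (if ((0, 3) : ℕ × ℕ) = v then (1:ℤ) else 0)
      + (q^15 - 2*q^14 + q^13 + 2*q^12 - 4*q^11 + 4*q^10 - 6*q^8 + 5*q^7 - 3*q^5 + 4*q^4
        - q^3 - 2*q^2 + q) * (if ((1, 0) : ℕ × ℕ) = v then (1:ℤ) else 0)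
      + (-q^16 + q^14 - q^13 + 2*q^12 + q^11 - 4*q^10 + q^9 + q^8 - 2*q^7 + 3*q^6 + q^5
        - 3*q^4 + q^2) * (if ((1, 1) : ℕ × ℕ) = v then (1:ℤ) else 0)
      + (q^14 - q^12 - q^10 + 2*q^8 - q^6) * (if ((1, 2) : ℕ × ℕ) = v then (1:ℤ) else 0)
      + (q^14 - q^13 + q^11 - 2*q^10 + q^9 + q^8 - q^7)
          * (if ((2, 0) : ℕ × ℕ) = v then (1:ℤ) else 0)
      + (-q^12 + q^10) * (if ((2, 1) : ℕ × ℕ) = v then (1:ℤ) else 0), ?_⟩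
  simp only [P2, P4, Module.End.mul_apply, LinearMap.add_apply, LinearMap.sub_apply,
    LinearMap.smul_apply, LinearMap.neg_apply, Module.End.one_apply,
    map_add, map_smul, map_sub, map_neg, T10_app, T01_app,
    T10fun00, T10fun10, T10fun01, T01fun_a0, T01fun_a1, T01fun_a2,
    smul_add, smul_smul]
  simp only [e, Finsupp.coe_add, Finsupp.coe_smul, Pi.add_apply, Pi.smul_apply,
    Finsupp.coe_neg, Pi.neg_apply, Finsupp.coe_sub, Pi.sub_apply,
    Finsupp.single_apply, smul_eq_mul]
  ring

end DistributionRelations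
end

section
/- Let p be an odd prime and let u be a unit of ℤ_p. Let R := ℤ_p[X]/(X² − Polynomial.C u), a free ℤ_p-algebra with basis 1, η where η is the image of X, and let σ be the unique ℤ_p-algebra automorphism of R with σ(η) = −η. Let x, y ∈ ℤ_p, let c be a positive integer, and let s ∈ R satisfy s − 1 ∈ p^c·R. If σ(x + η·y) = (x + η·y)·s, then y ∈ p^c·ℤ_p; equivalently, x + η·y lies in the subring ℤ_p + p^c·R. -/
open Polynomial

/-!
Applying `σ` gives `(x + ηy)(s - 1) = σ(x + ηy) - (x + ηy) = -2ηy`, so `p^c` divides `2y·η` in `R`.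
Since `1, η` is a `ℤ_p`-basis of `R`, reading off the `η`-coordinate gives `p^c ∣ 2y` in `ℤ_p`,
and `2` is a unit of `ℤ_p` because `p` is odd.
-/

theorem PadicInt.isUnit_natCast_iff {p : ℕ} [Fact p.Prime] {n : ℕ} :
    IsUnit (n : ℤ_[p]) ↔ p.Coprime n := by
  rw [isUnit_iff, norm_natCast_eq_one_iff]

theorem PadicInt.isUnit_two {p : ℕ} [Fact p.Prime] (hp : p ≠ 2) : IsUnit (2 : ℤ_[p]) := by
  simpa using isUnit_natCast_iff.mpr ((Nat.coprime_primes Fact.out Nat.prime_two).mpr hp)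

theorem Module.Basis.dvd_of_algebraMap_dvd_mul {A R ι : Type*} [CommSemiring A] [Semiring R]
    [Algebra A R] (B : Basis ι A R) (i : ι) {a b : A}
    (h : algebraMap A R a ∣ algebraMap A R b * B i) : a ∣ b := by
  obtain ⟨r, hr⟩ := h
  refine ⟨B.coord i r, ?_⟩
  simpa [← Algebra.smul_def] using congrArg (B.coord i) hr

theorem AdjoinRoot.powerBasis'_basis_one {A : Type*} [CommRing A] {f : A[X]} (hf : f.Monic)
    (h : 1 < f.natDegree) : (powerBasis' hf).basis ⟨1, h⟩ = root f := by
  simp [PowerBasis.coe_basis]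

theorem conj_eq_mul_of_cong_one_general (p : ℕ) [Fact p.Prime] (hp : p ≠ 2) (u : ℤ_[p]ˣ)
    (σ : (ℤ_[p][X] ⧸ Ideal.span {X ^ 2 - C (u : ℤ_[p])}) →ₐ[ℤ_[p]]
         (ℤ_[p][X] ⧸ Ideal.span {X ^ 2 - C (u : ℤ_[p])}))
    (hσ : σ (Ideal.Quotient.mk _ X) = -(Ideal.Quotient.mk _ X))
    (x y : ℤ_[p]) (c : ℕ)
    (s : ℤ_[p][X] ⧸ Ideal.span {X ^ 2 - C (u : ℤ_[p])})
    (hs : ((p : ℤ_[p][X] ⧸ Ideal.span {X ^ 2 - C (u : ℤ_[p])}) ^ c) ∣ (s - 1))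
    (h : σ (algebraMap ℤ_[p] _ x + Ideal.Quotient.mk _ X * algebraMap ℤ_[p] _ y)
        = (algebraMap ℤ_[p] _ x + Ideal.Quotient.mk _ X * algebraMap ℤ_[p] _ y) * s) :
    (p : ℤ_[p]) ^ c ∣ y := by
  set A := algebraMap ℤ_[p] (ℤ_[p][X] ⧸ Ideal.span {X ^ 2 - C (u : ℤ_[p])})
  set η : ℤ_[p][X] ⧸ Ideal.span {X ^ 2 - C (u : ℤ_[p])} := Ideal.Quotient.mk _ X
  have hf : (X ^ 2 - C (u : ℤ_[p])).Monic := monic_X_pow_sub_C _ two_ne_zero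
  have hdeg : 1 < (X ^ 2 - C (u : ℤ_[p])).natDegree := by simp
  have hconj : σ (A x + η * A y) = A x - η * A y := by
    rw [map_add, map_mul, AlgHom.commutes, AlgHom.commutes, hσ]
    ring
  have hdvd : A ((p : ℤ_[p]) ^ c) ∣ A (2 * y) * η := by
    have hdiff : (A x + η * A y) * (s - 1) = -(A (2 * y) * η) := by
      rw [mul_sub, mul_one, ← h, hconj, map_mul, map_ofNat]
      ring
    rw [map_pow, map_natCast, ← dvd_neg, ← hdiff]
    exact hs.mul_left _
  have hdvd2 : (p : ℤ_[p]) ^ c ∣ 2 * y :=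
    (AdjoinRoot.powerBasis' hf).basis.dvd_of_algebraMap_dvd_mul ⟨1, hdeg⟩
      (by rwa [AdjoinRoot.powerBasis'_basis_one])
  exact (PadicInt.isUnit_two hp).dvd_mul_left.mp hdvd2

/-- Lemma 3.1: in `R = ℤ_p[η]` with `η² = u` a unit and `p` odd, if
`σ(x + η·y) = (x + η·y)·s` with `s ≡ 1 (mod p^c)`, then `p^c ∣ y`, i.e.
`x + η·y` lies in the order `ℤ_p + p^c·R` of conductor `p^c`. -/
theorem conj_eq_mul_of_cong_one (p : ℕ) [Fact p.Prime] (hp : p ≠ 2) (u : ℤ_[p]ˣ)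
    (σ : (ℤ_[p][X] ⧸ Ideal.span {X ^ 2 - C (u : ℤ_[p])}) →ₐ[ℤ_[p]]
         (ℤ_[p][X] ⧸ Ideal.span {X ^ 2 - C (u : ℤ_[p])}))
    (hσ : σ (Ideal.Quotient.mk _ X) = -(Ideal.Quotient.mk _ X))
    (x y : ℤ_[p]) (c : ℕ) (hc : 0 < c)
    (s : ℤ_[p][X] ⧸ Ideal.span {X ^ 2 - C (u : ℤ_[p])})
    (hs : ((p : ℤ_[p][X] ⧸ Ideal.span {X ^ 2 - C (u : ℤ_[p])}) ^ c) ∣ (s - 1))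
    (h : σ (algebraMap ℤ_[p] _ x + Ideal.Quotient.mk _ X * algebraMap ℤ_[p] _ y)
        = (algebraMap ℤ_[p] _ x + Ideal.Quotient.mk _ X * algebraMap ℤ_[p] _ y) * s) :
    (p : ℤ_[p]) ^ c ∣ y :=
  conj_eq_mul_of_cong_one_general p hp u σ hσ x y c s hs h
end

section
/- Let R be a commutative ring equipped with an involutive ring endomorphism written star (a commutative star ring). Let ϖ ∈ R, let β, γ ∈ R with β a unit and β·star β + γ + star γ = 0, and let d, m be natural numbers. Let S := S_{β,γ}. Suppose A is the 3×3 matrix over R with rows (x₁₁, 0, x₁₃), (0, 1, 0), (x₃₁, 0, x₃₃) where ϖ^{2m} divides x₃₁, and B = (y_{ij}) is a 3×3 matrix over R with ϖ^d ∣ y₁₂, ϖ^{2d} ∣ y₁₃, ϖ^m ∣ y₂₁, ϖ^d ∣ y₂₃, ϖ^{2m} ∣ y₃₁, ϖ^m ∣ y₃₂, and suppose S·A = B·S. Then ϖ^{min(d, 2m)} divides x₁₁ − 1, ϖ^{min(d, 2m)} divides x₃₃ − 1, and ϖ^{min(d, 2m)} divides det A − 1. -/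
/-- The upper-unitriangular matrix `S_{β,γ}` with rows `(1, β, γ)`, `(0, 1, −star β)`,
`(0, 0, 1)`. -/
def Sbg {R : Type*} [CommRing R] [StarRing R] (β γ : R) : Matrix (Fin 3) (Fin 3) R :=
  !![1, β, γ; 0, 1, -(star β); 0, 0, 1]

/-- Forward inclusion in the proof of Lemma 3.4 (Local Conductor Formula): the diagonal
congruences forced by the matrix equation `S·A = B·S` with `B` integral of shape (27). -/
theorem stabilizer_det_congruence {R : Type*} [CommRing R] [StarRing R]
    (ϖ β γ : R) (hβ : IsUnit β) (hrel : β * star β + γ + star γ = 0) (d m : ℕ)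
    (x11 x13 x31 x33 : R) (A B : Matrix (Fin 3) (Fin 3) R)
    (hA : A = !![x11, 0, x13; 0, 1, 0; x31, 0, x33])
    (hx31 : ϖ ^ (2 * m) ∣ x31)
    (hB12 : ϖ ^ d ∣ B 0 1) (hB13 : ϖ ^ (2 * d) ∣ B 0 2)
    (hB21 : ϖ ^ m ∣ B 1 0) (hB23 : ϖ ^ d ∣ B 1 2)
    (hB31 : ϖ ^ (2 * m) ∣ B 2 0) (hB32 : ϖ ^ m ∣ B 2 1)
    (hSA : Sbg β γ * A = B * Sbg β γ) :
    ϖ ^ min d (2 * m) ∣ (x11 - 1) ∧ ϖ ^ min d (2 * m) ∣ (x33 - 1) ∧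
      ϖ ^ min d (2 * m) ∣ (A.det - 1) := by
  subst hA
  have hmd : ϖ ^ min d (2 * m) ∣ ϖ ^ d := pow_dvd_pow _ (min_le_left _ _)
  have hmm : ϖ ^ min d (2 * m) ∣ ϖ ^ (2 * m) := pow_dvd_pow _ (min_le_right _ _)
  have e00 := congrFun (congrFun hSA 0) 0
  have e01 := congrFun (congrFun hSA 0) 1
  have e10 := congrFun (congrFun hSA 1) 0
  have e11 := congrFun (congrFun hSA 1) 1
  have e12 := congrFun (congrFun hSA 1) 2
  simp [Sbg, Matrix.mul_apply, Fin.sum_univ_three, Matrix.vecHead, Matrix.vecTail] at e00 e01 e10 e11 e12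
  -- x11 part
  have hB01 : B 0 1 = β * (1 - B 0 0) := by linear_combination -e01
  have h1 : ϖ ^ min d (2 * m) ∣ (1 - B 0 0) :=
    hβ.dvd_mul_left.mp (hB01 ▸ hmd.trans hB12)
  have hx31' : ϖ ^ min d (2 * m) ∣ x31 := hmm.trans hx31
  have hx11 : ϖ ^ min d (2 * m) ∣ (x11 - 1) := by
    have : x11 - 1 = -(1 - B 0 0) - γ * x31 := by linear_combination e00
    rw [this]
    exact dvd_sub h1.neg_right (hx31'.mul_left _)
  -- x33 part
  have hB10 : ϖ ^ min d (2 * m) ∣ B 1 0 := by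
    have : B 1 0 = -(star β * x31) := by linear_combination -e10
    rw [this]
    exact (hx31'.mul_left _).neg_right
  have hsβ : IsUnit (star β) := hβ.star
  have key : star β * (1 - x33) = B 1 0 * (γ + β * star β) + B 1 2 := by
    linear_combination e12 + star β * e11
  have hx33 : ϖ ^ min d (2 * m) ∣ (x33 - 1) := by
    have h2 : ϖ ^ min d (2 * m) ∣ star β * (1 - x33) := by
      rw [key]; exact dvd_add (hB10.mul_right _) (hmd.trans hB23)
    have := hsβ.dvd_mul_left.mp h2
    have h3 : x33 - 1 = -(1 - x33) := by ring
    rw [h3]; exact this.neg_right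
  refine ⟨hx11, hx33, ?_⟩
  have hdet : (!![x11, 0, x13; 0, 1, 0; x31, 0, x33] : Matrix (Fin 3) (Fin 3) R).det - 1
      = (x11 - 1) * x33 + (x33 - 1) - x13 * x31 := by
    simp [Matrix.det_fin_three]; ring
  rw [hdet]
  exact dvd_sub (dvd_add (hx11.mul_right _) hx33) (hx31'.mul_left _)
end

section
/- Let R be a commutative ring equipped with an involutive ring endomorphism written star (a commutative star ring). Let β, γ, λ ∈ R with β·star β + γ + star γ = 0, and suppose that λ and γ + star γ are units of R (so star λ is also a unit). Set μ := λ·(star λ)⁻¹ and x := (1 − μ)·(γ + star γ)⁻¹, and let A be the 3×3 matrix over R with rows (1 − γ·x, 0, γ·(star γ)·x), (0, 1, 0), (x, 0, 1 − (star γ)·x). Then: (i) Aᴴ · J₃ · A = J₃; (ii) det A = μ; (iii) S·A·S⁻¹ is the 3×3 matrix with rows (1, 0, 0), (−(star β)·x, 1 + β·(star β)·x, 0), (x, −β·x, 1), where S := S_{β,γ} (which is invertible, being upper unitriangular). -/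
open scoped Matrix
/-- The antidiagonal Hermitian form `J₃`. -/
def J3 {R : Type*} [CommRing R] : Matrix (Fin 3) (Fin 3) R :=
  !![0, 0, 1; 0, 1, 0; 1, 0, 0]

set_option maxHeartbeats 1000000 in
/-- Case 2 of the proof of Lemma 3.4: the explicit `J₃`-unitary matrix `A` with
determinant `μ = λ·(star λ)⁻¹` whose conjugate by `S_{β,γ}` is lower unitriangular. -/
theorem case_two_unitary_element {R : Type*} [CommRing R] [StarRing R]
    (β γ lam : R) (hrel : β * star β + γ + star γ = 0)
    (hlam : IsUnit lam) (hγ : IsUnit (γ + star γ)) :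
    ∀ (μ x : R), μ = lam * Ring.inverse (star lam) →
      x = (1 - μ) * Ring.inverse (γ + star γ) →
      ∀ A : Matrix (Fin 3) (Fin 3) R,
        A = !![1 - γ * x, 0, γ * star γ * x; 0, 1, 0; x, 0, 1 - star γ * x] →
        Aᴴ * J3 * A = J3 ∧ A.det = μ ∧
          Sbg β γ * A * (Sbg β γ)⁻¹ =
            !![1, 0, 0; -(star β) * x, 1 + β * star β * x, 0; x, -(β * x), 1] := by
  intro μ x hμ hx A hA
  have hci : (γ + star γ) * Ring.inverse (γ + star γ) = 1 := Ring.mul_inverse_cancel _ hγ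
  have hstarc : star (γ + star γ) = γ + star γ := by simp [add_comm]
  have hli : lam * Ring.inverse lam = 1 := Ring.mul_inverse_cancel _ hlam
  have hsli : star lam * Ring.inverse (star lam) = 1 := Ring.mul_inverse_cancel _ hlam.star
  have hμs : star μ = star lam * Ring.inverse lam := by
    rw [hμ, star_mul, ← Ring.inverse_star, star_star]; ring
  have hμμ : μ * star μ = 1 := by
    rw [hμs, hμ]
    linear_combination lam * Ring.inverse lam * hsli + hli
  have hsci : star (Ring.inverse (γ + star γ)) = Ring.inverse (γ + star γ) := by
    rw [← Ring.inverse_star, hstarc]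
  have hsx : star x = (1 - star μ) * Ring.inverse (γ + star γ) := by
    rw [hx, star_mul, star_sub, star_one, hsci, mul_comm]
  have F1 : x + star x = x * star x * (γ + star γ) := by
    rw [hsx, hx]
    linear_combination (-(2 - μ - star μ) * Ring.inverse (γ + star γ)) * hci +
      (-(Ring.inverse (γ + star γ) * Ring.inverse (γ + star γ) * (γ + star γ))) * hμμ
  have hAH : Aᴴ = !![1 - star γ * star x, 0, star x; 0, 1, 0;
      γ * star γ * star x, 0, 1 - γ * star x] := by
    subst hA
    ext i j
    fin_cases i <;> fin_cases j <;>
      simp [Matrix.conjTranspose_apply, star_sub, star_mul] <;> ring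
  refine ⟨?_, ?_, ?_⟩
  · rw [hAH, hA, J3, Matrix.mul_fin_three, Matrix.mul_fin_three]
    ext i j
    fin_cases i <;> fin_cases j <;>
      simp [Matrix.vecHead, Matrix.vecTail] <;>
      first
        | ring1
        | linear_combination F1
        | linear_combination -F1
        | linear_combination (star γ) * F1
        | linear_combination (-(star γ)) * F1
        | linear_combination γ * F1
        | linear_combination (-γ) * F1
        | linear_combination (γ * star γ) * F1
        | linear_combination (-(γ * star γ)) * F1
  · rw [hA, Matrix.det_fin_three]
    simp [Matrix.vecHead, Matrix.vecTail]
    rw [hx]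
    linear_combination (μ - 1) * hci
  · have hSA : Sbg β γ * A =
        !![1, 0, 0; -(star β) * x, 1 + β * star β * x, 0; x, -(β * x), 1] * Sbg β γ := by
      rw [hA, Sbg, Matrix.mul_fin_three, Matrix.mul_fin_three]
      ext i j
      fin_cases i <;> fin_cases j <;>
        simp [Matrix.vecHead, Matrix.vecTail] <;>
        first
          | ring1
          | linear_combination x * hrel
          | linear_combination (-x) * hrel
          | linear_combination (star β * x) * hrel
          | linear_combination (-(star β * x)) * hrel
          | linear_combination (β * x) * hrel
          | linear_combination (-(β * x)) * hrel
          | linear_combination (β * star β * x) * hrel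
          | linear_combination (-(β * star β * x)) * hrel
    have hdet1 : (Sbg β γ).det = 1 := by
      simp [Sbg, Matrix.det_fin_three, Matrix.vecHead, Matrix.vecTail]
    have hdet : IsUnit (Sbg β γ).det := by rw [hdet1]; exact isUnit_one
    rw [hSA, Matrix.mul_assoc, Matrix.mul_nonsing_inv _ hdet, Matrix.mul_one]
end

section
/- Let R be a commutative ring equipped with an involutive ring endomorphism written star (a commutative star ring). Let β, γ, λ ∈ R with β·star β + γ + star γ = 0 and λ a unit of R (so star λ is also a unit). Set x := (1 − λ)·β, let y ∈ R be any element with x·star x + y + star y = 0, and let B be the 3×3 matrix over R with rows (λ, x, (star λ)⁻¹·y), (0, 1, −(star λ)⁻¹·star x), (0, 0, (star λ)⁻¹). Then: (i) Bᴴ · J₃ · B = J₃; (ii) with S := S_{β,γ}, the matrix S⁻¹·B·S is upper triangular with diagonal entries λ, 1, (star λ)⁻¹, and its (1,2) entry and (2,3) entry are both zero. -/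
set_option maxHeartbeats 2000000


open scoped Matrix

/-- Case 1 of the proof of Lemma 3.4: for `x = (1 − λ)·β` the matrix `B` is `J₃`-unitary and
its conjugate `S⁻¹·B·S` is upper triangular with diagonal `(λ, 1, (star λ)⁻¹)` and vanishing
`(1,2)` and `(2,3)` entries. -/
theorem case_one_unitary_element {R : Type*} [CommRing R] [StarRing R]
    (β γ lam : R) (hrel : β * star β + γ + star γ = 0) (hlam : IsUnit lam) :
    ∀ x y : R, x = (1 - lam) * β → x * star x + y + star y = 0 →
      ∀ B : Matrix (Fin 3) (Fin 3) R,
        B = !![lam, x, Ring.inverse (star lam) * y;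
               0, 1, -(Ring.inverse (star lam) * star x);
               0, 0, Ring.inverse (star lam)] →
        Bᴴ * J3 * B = J3 ∧
          ∃ t : R, (Sbg β γ)⁻¹ * B * Sbg β γ =
            !![lam, 0, t; 0, 1, 0; 0, 0, Ring.inverse (star lam)] := by
  intro x y hx hy B hB
  subst hB
  set ν := Ring.inverse (star lam) with hνdef
  have hls : IsUnit (star lam) := hlam.star
  have hν : star lam * ν = 1 := Ring.mul_inverse_cancel _ hls
  have hsν : lam * star ν = 1 := by
    have := congrArg star hν
    simpa [mul_comm] using this
  have hsx : star x = (1 - star lam) * star β := by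
    rw [hx]; simp [star_mul, mul_comm]
  constructor
  · ext i j
    fin_cases i <;> fin_cases j <;>
      simp [Matrix.mul_apply, Fin.sum_univ_three, Matrix.conjTranspose_apply, J3,
        Matrix.vecHead, Matrix.vecTail]
    all_goals first
      | ring1
      | linear_combination hrel
      | exact hν
      | linear_combination hsν
      | linear_combination (star ν * ν) * hy
      | linear_combination hx
      | linear_combination -β * hx
      | linear_combination β * hx
      | linear_combination -ν * hsx + star β * hν
      | linear_combination ν * hsx - star β * hν
  · refine ⟨lam * γ - x * star β + β * star β + ν * y + β * ν * star x + star γ * ν, ?_⟩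
    have hSinv : (Sbg β γ)⁻¹ = !![1, -β, star γ; 0, 1, star β; 0, 0, 1] := by
      apply Matrix.inv_eq_left_inv
      ext i j
      fin_cases i <;> fin_cases j <;>
        simp [Matrix.mul_apply, Fin.sum_univ_three, Sbg, Matrix.one_apply,
          Matrix.vecHead, Matrix.vecTail]
      all_goals first
      | ring1
      | linear_combination hrel
      | exact hν
      | linear_combination hsν
      | linear_combination (star ν * ν) * hy
      | linear_combination hx
      | linear_combination -β * hx
      | linear_combination β * hx
      | linear_combination -ν * hsx + star β * hν
      | linear_combination ν * hsx - star β * hν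
    rw [hSinv]
    ext i j
    fin_cases i <;> fin_cases j <;>
      simp [Matrix.mul_apply, Fin.sum_univ_three, Sbg, Matrix.vecHead, Matrix.vecTail]
    all_goals first
      | ring1
      | linear_combination hrel
      | exact hν
      | linear_combination hsν
      | linear_combination (star ν * ν) * hy
      | linear_combination hx
      | linear_combination -β * hx
      | linear_combination β * hx
      | linear_combination -ν * hsx + star β * hν
      | linear_combination ν * hsx - star β * hν
end

section
/- Let O be a valuation ring (an integral domain in which the ideals are totally ordered) with field of fractions K, and let n be a natural number. Let D₁ and D₂ be invertible diagonal n×n matrices over K, and let U be an upper-triangular n×n matrix over K all of whose diagonal entries are equal to 1. Suppose that every entry of M := D₂⁻¹·U·D₁ lies in the image of O in K and that det M is the image of a unit of O. Then for every index i, the element (D₁)_{ii}·((D₂)_{ii})⁻¹ of K is the image of a unit of O; in particular, every entry of D₂⁻¹·D₁ and of its inverse lies in the image of O. -/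
/-- Algebraic core of Lemma 4.3: if `D₂⁻¹·U·D₁` is integral with unit determinant, where the
`Dᵢ` are invertible diagonal matrices over the fraction field of a valuation ring and `U` is
upper triangular with unit diagonal, then each `(D₁)ᵢᵢ·(D₂)ᵢᵢ⁻¹` is (the image of) a unit of
the valuation ring; in particular `D₂⁻¹·D₁` and its inverse are integral. -/
theorem diagonal_unit_of_unipotent_integral {O K : Type*}
    [CommRing O] [IsDomain O] [ValuationRing O]
    [Field K] [Algebra O K] [IsFractionRing O K] (n : ℕ)
    (d₁ d₂ : Fin n → K) (h₁ : ∀ i, d₁ i ≠ 0) (h₂ : ∀ i, d₂ i ≠ 0)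
    (U : Matrix (Fin n) (Fin n) K) (hU : U.BlockTriangular id) (hUdiag : ∀ i, U i i = 1)
    (M : Matrix (Fin n) (Fin n) K)
    (hM : M = (Matrix.diagonal d₂)⁻¹ * U * Matrix.diagonal d₁)
    (hint : ∀ i j, M i j ∈ (algebraMap O K).range)
    (hdet : ∃ a : Oˣ, algebraMap O K a = M.det) :
    (∀ i, ∃ a : Oˣ, algebraMap O K a = d₁ i * (d₂ i)⁻¹) ∧
    (∀ i j, ((Matrix.diagonal d₂)⁻¹ * Matrix.diagonal d₁) i j ∈ (algebraMap O K).range) ∧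
    (∀ i j, (((Matrix.diagonal d₂)⁻¹ * Matrix.diagonal d₁)⁻¹) i j ∈ (algebraMap O K).range) := by
  have hinv : (Matrix.diagonal d₂)⁻¹ = Matrix.diagonal (fun i => (d₂ i)⁻¹) := by
    refine Matrix.inv_eq_right_inv ?_
    rw [Matrix.diagonal_mul_diagonal]
    convert Matrix.diagonal_one
    simp [h₂]
  -- diagonal entries of M
  have hMdiag : ∀ i, M i i = (d₂ i)⁻¹ * d₁ i := by
    intro i
    simp [hM, hinv, Matrix.mul_apply, Matrix.diagonal_apply, Finset.mul_sum,
      Matrix.diagonal_mul, Matrix.mul_diagonal, hUdiag i]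
  -- det M = product of diagonal entries
  have hMtri : M.BlockTriangular id := by
    rw [hM, hinv]
    exact ((Matrix.blockTriangular_diagonal _).mul hU).mul (Matrix.blockTriangular_diagonal _)
  have hdetM : M.det = ∏ i, M i i := Matrix.det_of_upperTriangular hMtri
  -- choose preimages
  choose a ha using fun i => hint i i
  obtain ⟨u, hu⟩ := hdet
  have hprod : algebraMap O K (∏ i, a i) = algebraMap O K (u : O) := by
    rw [map_prod, hu, hdetM]
    exact Finset.prod_congr rfl fun i _ => ha i
  have hprodeq : (∏ i, a i) = (u : O) := IsFractionRing.injective O K hprod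
  have haunit : ∀ i, IsUnit (a i) := by
    intro i
    have : IsUnit (∏ j, a j) := hprodeq ▸ u.isUnit
    exact isUnit_of_dvd_unit (Finset.dvd_prod_of_mem a (Finset.mem_univ i)) this
  have key : ∀ i, ∃ v : Oˣ, algebraMap O K v = d₁ i * (d₂ i)⁻¹ := by
    intro i
    obtain ⟨v, hv⟩ := haunit i
    exact ⟨v, by rw [hv, ha i, hMdiag i, mul_comm]⟩
  refine ⟨key, ?_, ?_⟩
  · intro i j
    rw [hinv, Matrix.diagonal_mul_diagonal]
    rcases eq_or_ne i j with rfl | hij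
    · obtain ⟨v, hv⟩ := key i
      exact ⟨v, by rw [hv, Matrix.diagonal_apply_eq, mul_comm]⟩
    · simp [Matrix.diagonal_apply_ne _ hij]
  · intro i j
    have hinv2 : ((Matrix.diagonal d₂)⁻¹ * Matrix.diagonal d₁)⁻¹
        = Matrix.diagonal (fun i => (d₁ i)⁻¹ * d₂ i) := by
      rw [hinv, Matrix.diagonal_mul_diagonal]
      refine Matrix.inv_eq_right_inv ?_
      rw [Matrix.diagonal_mul_diagonal]
      convert Matrix.diagonal_one using 2
      funext x
      field_simp [mul_comm]
      exact div_self (by simp [h₁ x, h₂ x])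
    rw [hinv2]
    rcases eq_or_ne i j with rfl | hij
    · obtain ⟨v, hv⟩ := key i
      refine ⟨(v⁻¹ : Oˣ), ?_⟩
      have hvinv : algebraMap O K ((v⁻¹ : Oˣ) : O) = (d₁ i * (d₂ i)⁻¹)⁻¹ := by
        refine eq_inv_of_mul_eq_one_left ?_
        rw [← hv, ← map_mul]; simp
      rw [Matrix.diagonal_apply_eq, hvinv, mul_inv, inv_inv]
    · simp [Matrix.diagonal_apply_ne _ hij]
end
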